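/- arXiv:1901.07304 — 2 statements merged into one kernel-verified Lean document; each statement's English description precedes it below -/
import Mathlib

section
/- Let (X,f) be a TDS with the uniform separation property and φ: X → ℝ continuous. For any η > 0 there exist δ* > 0 and ε* > 0 such that for every ergodic μ ∈ E(X,f) and every sufficiently small neighborhood F ⊂ M(X) of μ there exists n*_{F,μ,η} ∈ ℕ such that for every n ≥ n*_{F,μ,η} there exists a (δ*,n,ε*)-separated set Γ_n ⊂ X_{n,F} with Σ_{x∈Γ_n} e^{S_nφ(x)} ≥ exp[n(h_μ(f) + ∫φ dμ − η)]. -/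
/-!
Apply uniform separation with `η / 2` to get, for large `n`, a `(δ*, n, ε*)`-separated set
`Γ ⊆ X_{n,F}` with `#Γ ≥ e^{n (h - η/2)}`. Since `S_n φ(x) = n ∫ φ dE_n(x)`, shrinking `F` inside
the weak-star open set `{ν | ∫ φ dν > ∫ φ dμ - η/2}` makes every term `e^{S_n φ(x)}` at least
`e^{n (∫ φ dμ - η/2)}`, and the two bounds multiply to the claim.
-/

open MeasureTheory Filter Set
open scoped ENNReal NNReal

namespace Paper

variable {X : Type*}

/-- Birkhoff sum `S_n φ(x) = ∑_{i<n} φ(f^i x)`. -/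
def birk (f : X → X) (φ : X → ℝ) (n : ℕ) (x : X) : ℝ :=
  ∑ i ∈ Finset.range n, φ (f^[i] x)

section Metric

variable [MetricSpace X]

/-- The Bowen ball `B_n(x, ε) = {y : d_n(x,y) < ε}`. -/
def bowenBall (f : X → X) (x : X) (n : ℕ) (ε : ℝ) : Set X :=
  {y | ∀ i < n, dist (f^[i] x) (f^[i] y) < ε}

/-- The number of indices `0 ≤ j ≤ n-1` with `dist (f^j x, f^j y) > ε`. -/
noncomputable def sepCount (f : X → X) (ε : ℝ) (n : ℕ) (x y : X) : ℕ :=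
  Nat.card {j : ℕ // j < n ∧ ε < dist (f^[j] x) (f^[j] y)}

/-- `A` is an `(n,ε)`-separated set. -/
def IsNSep (f : X → X) (n : ℕ) (ε : ℝ) (A : Set X) : Prop :=
  ∀ x ∈ A, ∀ y ∈ A, x ≠ y → ∃ j < n, ε < dist (f^[j] x) (f^[j] y)

/-- `A` is a `(δ,n,ε)`-separated set. -/
def IsDeltaSep (f : X → X) (δ : ℝ) (n : ℕ) (ε : ℝ) (A : Set X) : Prop :=
  ∀ x ∈ A, ∀ y ∈ A, x ≠ y → δ * n ≤ (sepCount f ε n x y : ℝ)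

end Metric

section Entropy

variable [MeasurableSpace X]

/-- A finite measurable partition of `X`. -/
def IsFinPartition (s : Finset (Set X)) : Prop :=
  (∀ A ∈ s, MeasurableSet A) ∧ ⋃₀ (s : Set (Set X)) = Set.univ ∧
    (s : Set (Set X)).Pairwise Disjoint

/-- The entropy `H(μ, ⋁_{i<n} f^{-i} ξ)` of the `n`-th dynamical refinement of the
partition `s` (with the convention `0 · log 0 = 0`). -/
noncomputable def dynH (f : X → X) (μ : Measure X) (s : Finset (Set X)) (n : ℕ) : ℝ :=
  -∑ w : Fin n → {A // A ∈ s},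
      (μ (⋂ i : Fin n, f^[(i : ℕ)] ⁻¹' ((w i : Set X)))).toReal *
        Real.log (μ (⋂ i : Fin n, f^[(i : ℕ)] ⁻¹' ((w i : Set X)))).toReal

/-- The Kolmogorov–Sinai entropy `h_μ(f)`, as an extended real:
`sup_ξ lim_n H(μ, ξ^n)/n`. -/
noncomputable def ksEntropy (f : X → X) (μ : Measure X) : EReal :=
  ⨆ (s : Finset (Set X)) (_ : IsFinPartition s),
    Filter.atTop.liminf (fun n : ℕ => ((dynH f μ s n / n : ℝ) : EReal))

end Entropy

section Empiric

variable [MeasurableSpace X]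

/-- The empiric measure `E_n(x) = (1/n) ∑_{k<n} δ_{f^k x}`. -/
noncomputable def empiric (f : X → X) (x : X) (n : ℕ) : Measure X :=
  (n : ℝ≥0∞)⁻¹ • ∑ k ∈ Finset.range n, Measure.dirac (f^[k] x)

end Empiric

section WeakStar

variable [MeasurableSpace X] [TopologicalSpace X] [OpensMeasurableSpace X]

/-- The set `X_{n,F}` of points whose `n`-th empiric measure lies in `F ⊆ M(X)`
(where `M(X)`, the space of Borel probability measures, carries the weak-star topology). -/
def Xnf (f : X → X) (n : ℕ) (F : Set (ProbabilityMeasure X)) : Set X :=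
  {x | ∃ h : IsProbabilityMeasure (empiric f x n),
        (⟨empiric f x n, h⟩ : ProbabilityMeasure X) ∈ F}

end WeakStar

section UniformSep

variable [MetricSpace X] [MeasurableSpace X] [OpensMeasurableSpace X]

/-- `N(F;δ,n,ε)`: the maximal cardinality of a `(δ,n,ε)`-separated subset of `X_{n,F}`. -/
noncomputable def Nsep (f : X → X) (F : Set (ProbabilityMeasure X))
    (δ : ℝ) (n : ℕ) (ε : ℝ) : ℕ :=
  sSup {k : ℕ | ∃ E : Finset X, ↑E ⊆ Xnf f n F ∧ IsDeltaSep f δ n ε ↑E ∧ E.card = k}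

/-- The uniform separation property: for every `η > 0` there are `δ* > 0`, `ε* > 0`
such that for each ergodic `μ`, each real `h ≤ h_μ(f)` and each neighborhood `F` of `μ`,
eventually `N(F;δ*,n,ε*) ≥ e^{n(h-η)}`. -/
def UniformSeparation (f : X → X) : Prop :=
  ∀ η : ℝ, 0 < η → ∃ δs > (0 : ℝ), ∃ εs > (0 : ℝ),
    ∀ (μ : Measure X) (hp : IsProbabilityMeasure μ), Ergodic f μ →
      ∀ h : ℝ, (h : EReal) ≤ ksEntropy f μ →
        ∀ F ∈ nhds (X := ProbabilityMeasure X) ⟨μ, hp⟩,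
          ∃ nstar : ℕ, ∀ n : ℕ, nstar ≤ n →
            Real.exp ((n : ℝ) * (h - η)) ≤ (Nsep f F δs n εs : ℝ)

/-- The ergodic measures of `(X,f)` are entropy dense. -/
def EntropyDense (f : X → X) : Prop :=
  ∀ (μ : Measure X) (hp : IsProbabilityMeasure μ), MeasurePreserving f μ μ →
    ∀ F ∈ nhds (X := ProbabilityMeasure X) ⟨μ, hp⟩,
      ∀ hstar : ℝ, (hstar : EReal) < ksEntropy f μ →
        ∃ ν : ProbabilityMeasure X, ν ∈ F ∧ Ergodic f ν.toMeasure ∧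
          (hstar : EReal) < ksEntropy f ν.toMeasure

end UniformSep

end Paper

open Paper

theorem Nat.exists_mem_le_of_le_sSup {S : Set ℕ} (hS : S.Nonempty) {c : ℝ}
    (hc : c ≤ sSup S) : ∃ k ∈ S, c ≤ k := by
  by_cases hbdd : BddAbove S
  · exact ⟨sSup S, Nat.sSup_mem hS hbdd, hc⟩
  · obtain ⟨k, hkS, hk⟩ := not_bddAbove_iff.mp hbdd ⌈c⌉₊
    exact ⟨k, hkS, (Nat.le_ceil c).trans (by exact_mod_cast hk.le)⟩

open BoundedContinuousFunction

namespace Paper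

variable {X : Type*}

theorem Xnf_mono [MeasurableSpace X] {f : X → X} {n : ℕ} {F G : Set (ProbabilityMeasure X)}
    (hFG : F ⊆ G) : Xnf f n F ⊆ Xnf f n G :=
  fun _ ⟨hp, hx⟩ => ⟨hp, hFG hx⟩

section Empiric

variable [TopologicalSpace X] [MeasurableSpace X] [OpensMeasurableSpace X]

theorem integral_empiric (f : X → X) (φ : X →ᵇ ℝ) (x : X) (n : ℕ) :
    ∫ y, φ y ∂(empiric f x n) = birk f φ n x / n := by
  rw [empiric, integral_smul_measure, integral_finsetSum_measure fun _ _ => φ.integrable _]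
  simp only [integral_dirac' _ _ φ.continuous.stronglyMeasurable, ENNReal.toReal_inv,
    ENNReal.toReal_natCast, smul_eq_mul, birk]
  exact inv_mul_eq_div _ _

theorem mul_lt_birk_of_mem_Xnf {f : X → X} (φ : X →ᵇ ℝ) {n : ℕ} (hn : 0 < n) {c : ℝ} {x : X}
    (hx : x ∈ Xnf f n {ν : ProbabilityMeasure X | c < ∫ y, φ y ∂(ν : Measure X)}) :
    n * c < birk f φ n x := by
  obtain ⟨_, hc⟩ := hx
  have hc : c < birk f φ n x / n := integral_empiric f φ x n ▸ hc
  rwa [lt_div_iff₀ (by exact_mod_cast hn), mul_comm] at hc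

end Empiric

theorem exists_finset_of_le_Nsep [MetricSpace X] [MeasurableSpace X] [OpensMeasurableSpace X]
    {f : X → X} {F : Set (ProbabilityMeasure X)} {δ ε : ℝ} {n : ℕ} {c : ℝ}
    (hc : c ≤ Nsep f F δ n ε) :
    ∃ Γ : Finset X, ↑Γ ⊆ Xnf f n F ∧ IsDeltaSep f δ n ε ↑Γ ∧ c ≤ Γ.card := by
  have hempty : (0 : ℕ) ∈ {k : ℕ | ∃ E : Finset X, ↑E ⊆ Xnf f n F ∧ IsDeltaSep f δ n ε ↑E ∧
      E.card = k} := ⟨∅, by simp, by simp [IsDeltaSep], rfl⟩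
  obtain ⟨_, ⟨Γ, hΓF, hΓsep, rfl⟩, hcΓ⟩ := Nat.exists_mem_le_of_le_sSup ⟨0, hempty⟩ hc
  exact ⟨Γ, hΓF, hΓsep, hcΓ⟩

end Paper

theorem separated_set_of_uniform_separation_general {X : Type*} [MetricSpace X] [CompactSpace X] [MeasurableSpace X] [BorelSpace X]
    (f : X → X) (hus : UniformSeparation f)
    (φ : X → ℝ) (hφ : Continuous φ) (η : ℝ) (hη : 0 < η) :
    ∃ δs > (0 : ℝ), ∃ εs > (0 : ℝ),
      ∀ (μ : Measure X) (hp : IsProbabilityMeasure μ), Ergodic f μ →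
        ∀ h : ℝ, (h : EReal) ≤ ksEntropy f μ →
          ∃ F₀ ∈ nhds (X := MeasureTheory.ProbabilityMeasure X) ⟨μ, hp⟩,
            ∀ F ∈ nhds (X := MeasureTheory.ProbabilityMeasure X) ⟨μ, hp⟩, F ⊆ F₀ →
              ∃ nstar : ℕ, ∀ n : ℕ, nstar ≤ n →
                ∃ Γ : Finset X, ↑Γ ⊆ Xnf f n F ∧ IsDeltaSep f δs n εs ↑Γ ∧
                  Real.exp ((n : ℝ) * (h + ∫ x, φ x ∂μ - η)) ≤
                    ∑ x ∈ Γ, Real.exp (birk f φ n x) := by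
  obtain ⟨δs, hδ, εs, hε, hsep⟩ := hus (η / 2) (half_pos hη)
  refine ⟨δs, hδ, εs, hε, fun μ hp herg h hh => ?_⟩
  let φb : X →ᵇ ℝ := .mkOfCompact ⟨φ, hφ⟩
  set I := ∫ x, φ x ∂μ
  refine ⟨{ν | I - η / 2 < ∫ x, φb x ∂(ν : Measure X)},
    (isOpen_lt continuous_const
      (ProbabilityMeasure.continuous_integral_boundedContinuousFunction φb)).mem_nhds
      (show I - η / 2 < I by linarith), fun F hF hF₀ => ?_⟩
  obtain ⟨N, hN⟩ := hsep μ hp herg h hh F hF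
  refine ⟨max N 1, fun n hn => ?_⟩
  obtain ⟨Γ, hΓF, hΓsep, hΓcard⟩ := exists_finset_of_le_Nsep (hN n (le_of_max_le_left hn))
  refine ⟨Γ, hΓF, hΓsep, ?_⟩
  have hbirk : ∀ x ∈ Γ, n * (I - η / 2) ≤ birk f φ n x := fun x hx =>
    (mul_lt_birk_of_mem_Xnf φb (le_of_max_le_right hn) (Xnf_mono hF₀ (hΓF hx))).le
  calc Real.exp (n * (h + I - η))
      = Real.exp (n * (h - η / 2)) * Real.exp (n * (I - η / 2)) := by
        rw [← Real.exp_add]; ring_nf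
    _ ≤ Γ.card * Real.exp (n * (I - η / 2)) := by gcongr
    _ ≤ ∑ x ∈ Γ, Real.exp (birk f φ n x) := by
        simpa only [nsmul_eq_mul] using Finset.card_nsmul_le_sum Γ _ _
          fun x hx => Real.exp_le_exp.mpr (hbirk x hx)

/-- Proposition 3.4: if `(X,f)` has the uniform separation property, then for any
`η > 0` there are `δ* > 0`, `ε* > 0`, independent of the ergodic measure `μ`, such that
for every ergodic `μ` and every sufficiently small weak-star neighborhood `F` of `μ`
there is `n*` such that for all `n ≥ n*` there is a `(δ*,n,ε*)`-separated set
`Γ_n ⊆ X_{n,F}` with `∑_{x∈Γ_n} e^{S_nφ(x)} ≥ exp (n (h_μ(f) + ∫φ dμ - η))`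
(stated for every real `h ≤ h_μ(f)`). -/
theorem separated_set_of_uniform_separation {X : Type*} [MetricSpace X] [CompactSpace X] [MeasurableSpace X] [BorelSpace X]
    (f : X → X) (hf : Continuous f) (hus : UniformSeparation f)
    (φ : X → ℝ) (hφ : Continuous φ) (η : ℝ) (hη : 0 < η) :
    ∃ δs > (0 : ℝ), ∃ εs > (0 : ℝ),
      ∀ (μ : Measure X) (hp : IsProbabilityMeasure μ), Ergodic f μ →
        ∀ h : ℝ, (h : EReal) ≤ ksEntropy f μ →
          ∃ F₀ ∈ nhds (X := MeasureTheory.ProbabilityMeasure X) ⟨μ, hp⟩,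
            ∀ F ∈ nhds (X := MeasureTheory.ProbabilityMeasure X) ⟨μ, hp⟩, F ⊆ F₀ →
              ∃ nstar : ℕ, ∀ n : ℕ, nstar ≤ n →
                ∃ Γ : Finset X, ↑Γ ⊆ Xnf f n F ∧ IsDeltaSep f δs n εs ↑Γ ∧
                  Real.exp ((n : ℝ) * (h + ∫ x, φ x ∂μ - η)) ≤
                    ∑ x ∈ Γ, Real.exp (birk f φ n x) :=
  separated_set_of_uniform_separation_general f hus φ hφ η hη
end

section
/- Let (X,f) be a TDS, φ: X → ℝ continuous, and μ ∈ M(X,f). Then P_μ(f,φ) = ess sup{P_μ(f,φ,x) : x ∈ X}, where the essential supremum is taken with respect to μ. -/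
open MeasureTheory Filter Set
open scoped ENNReal NNReal

namespace Paper

variable {X : Type*}

section Pressure

variable [MetricSpace X] [MeasurableSpace X]

/-- Brin–Katok local entropy `h_μ(x) = lim_{ε→0} liminf_n -(1/n) log μ(B_n(x,ε))`
(the limit in `ε` being a supremum by monotonicity). -/
noncomputable def localEntropy (f : X → X) (μ : Measure X) (x : X) : EReal :=
  ⨆ (ε : ℝ) (_ : 0 < ε),
    Filter.atTop.liminf (fun n : ℕ =>
      (((n : ℝ)⁻¹ : ℝ) : EReal) * (-(μ (bowenBall f x n ε)).log))

/-- The point-wise measure theoretic pressure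
`P_μ(f,φ,x) = lim_{ε→0} liminf_n (1/n)[-log μ(B_n(x,ε)) + S_nφ(x)]`. -/
noncomputable def ptPressure (f : X → X) (φ : X → ℝ) (μ : Measure X) (x : X) : EReal :=
  ⨆ (ε : ℝ) (_ : 0 < ε),
    Filter.atTop.liminf (fun n : ℕ =>
      (((n : ℝ)⁻¹ : ℝ) : EReal) * (-(μ (bowenBall f x n ε)).log + ((birk f φ n x : ℝ) : EReal)))

/-- `M(Z,φ,α,N,ε)`: infimum of `∑_i exp(-α n_i + S_{n_i}φ(x_i))` over countable covers
of `Z` by Bowen balls `B_{n_i}(x_i,ε)` with `n_i ≥ N`. -/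
noncomputable def Mcov (f : X → X) (φ : X → ℝ) (Z : Set X) (α : ℝ) (N : ℕ) (ε : ℝ) : ℝ≥0∞ :=
  ⨅ (c : ℕ → X × ℕ)
    (_ : (∀ i, N ≤ (c i).2) ∧ Z ⊆ ⋃ i, bowenBall f (c i).1 (c i).2 ε),
      ∑' i, ENNReal.ofReal (Real.exp (-α * ((c i).2 : ℝ) + birk f φ (c i).2 (c i).1))

/-- `m(Z,φ,α,ε) = lim_{N→∞} M(Z,φ,α,N,ε)` (a supremum, by monotonicity in `N`). -/
noncomputable def mZ (f : X → X) (φ : X → ℝ) (Z : Set X) (α : ℝ) (ε : ℝ) : ℝ≥0∞ :=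
  ⨆ N : ℕ, Mcov f φ Z α N ε

/-- `P_Z(f,φ,ε) = inf {α : m(Z,φ,α,ε) = 0}`, the jump-up point of `α ↦ m(Z,φ,α,ε)`. -/
noncomputable def PZeps (f : X → X) (φ : X → ℝ) (Z : Set X) (ε : ℝ) : EReal :=
  ⨅ (α : ℝ) (_ : mZ f φ Z α ε = 0), ((α : ℝ) : EReal)

/-- The topological pressure `P_Z(f,φ) = lim_{ε→0} P_Z(f,φ,ε)` on an arbitrary set `Z`
(the limit in `ε` being a supremum by monotonicity). -/
noncomputable def PZ (f : X → X) (φ : X → ℝ) (Z : Set X) : EReal :=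
  ⨆ (ε : ℝ) (_ : 0 < ε), PZeps f φ Z ε

/-- The measure theoretic pressure
`P_μ(f,φ) = lim_{ε→0} inf {P_Z(f,φ,ε) : Z Borel, μ(Z) = 1}`. -/
noncomputable def Pmu (f : X → X) (φ : X → ℝ) (μ : Measure X) : EReal :=
  ⨆ (ε : ℝ) (_ : 0 < ε),
    ⨅ (Z : Set X) (_ : MeasurableSet Z ∧ μ Z = 1), PZeps f φ Z ε

end Pressure

end Paper

/-!
If `P_μ(f,φ,x) < a` on a full-measure set `Z`, every `x ∈ Z` has arbitrarily long Bowen balls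
`B_n(x,ε/2)` of measure at least `exp(S_nφ(x) - na)`. A maximal `(n,ε)`-separated set of such
points has disjoint `ε/2`-balls, hence total weight at most `e^{-δn}` at exponent `a + δ`, while
its `ε`-balls cover them; taking all times `n ≥ M` gives covers of `Z` of weight `O(e^{-δM})`,
so `P_Z(f,φ,ε) ≤ a`.

Conversely, if `m(Z,φ,α,ε) = 0`, the points of `Z` with `μ(B_n(x,2ε)) ≤ exp(S_nφ(x) - n(α+η))`
for all large `n` form a null set: a ball `B_n(y,ε)` of a cover meets this set inside some
`B_n(x,2ε)`, and the oscillation `η` of `φ` at scale `ε` controls the change of `S_nφ`.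
Hence `P_μ(f,φ,x) ≤ α + η` almost everywhere.
-/

namespace Paper

variable {X : Type*}

section BowenBall

variable [MetricSpace X] {f : X → X} {x y z : X} {n : ℕ} {ε ε' : ℝ}

lemma mem_bowenBall_self (hε : 0 < ε) : x ∈ bowenBall f x n ε :=
  fun _ _ => by simpa using hε

lemma mem_bowenBall_comm : y ∈ bowenBall f x n ε ↔ x ∈ bowenBall f y n ε := by
  simp only [bowenBall, Set.mem_ofPred_eq, dist_comm]

lemma bowenBall_mono (h : ε ≤ ε') : bowenBall f x n ε ⊆ bowenBall f x n ε' :=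
  fun _ hy i hi => (hy i hi).trans_le h

lemma mem_bowenBall_add (hy : y ∈ bowenBall f x n ε) (hz : z ∈ bowenBall f y n ε') :
    z ∈ bowenBall f x n (ε + ε') :=
  fun i hi => (dist_triangle _ _ _).trans_lt (add_lt_add (hy i hi) (hz i hi))

lemma bowenBall_subset_two_mul (hy : y ∈ bowenBall f x n ε) :
    bowenBall f x n ε ⊆ bowenBall f y n (2 * ε) := fun _ hz => by
  simpa only [two_mul] using mem_bowenBall_add (mem_bowenBall_comm.1 hy) hz

def bowenRel (f : X → X) (n : ℕ) (ε : ℝ) : SetRel X X := {p | p.2 ∈ bowenBall f p.1 n ε}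

lemma isOpen_bowenRel (hf : Continuous f) : IsOpen (bowenRel f n ε) := by
  have : bowenRel f n ε = ⋂ i ∈ Finset.range n, {p | dist (f^[i] p.1) (f^[i] p.2) < ε} := by
    ext; simp [bowenRel, bowenBall]
  rw [this]
  exact isOpen_biInter_finset fun i _ =>
    isOpen_lt (((hf.iterate i).comp continuous_fst).dist ((hf.iterate i).comp continuous_snd))
      continuous_const

lemma isOpen_bowenBall (hf : Continuous f) : IsOpen (bowenBall f x n ε) :=
  (isOpen_bowenRel hf).preimage (Continuous.prodMk_right x)

end BowenBall

lemma _root_.SetRel.exists_maximal_isSeparated {α : Type*} (R : SetRel α α) (W : Set α) :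
    ∃ E, Maximal (fun E ↦ E ⊆ W ∧ R.IsSeparated E) E :=
  zorn_subset _ fun c hcW hc => ⟨⋃₀ c, ⟨sUnion_subset fun _ hs => (hcW hs).1,
    hc.pairwise_sUnion.2 fun _ hs => (hcW hs).2⟩, fun _ => subset_sUnion_of_mem⟩

section Separated

variable [MetricSpace X] {f : X → X} {n : ℕ} {ε : ℝ}

lemma pairwiseDisjoint_bowenBall_half {E : Set X} (hE : (bowenRel f n ε).IsSeparated E) :
    E.PairwiseDisjoint fun x => bowenBall f x n (ε / 2) := by
  refine fun x hx y hy hxy => Set.disjoint_left.2 fun z hzx hzy => hE hx hy hxy ?_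
  show y ∈ bowenBall f x n ε
  simpa only [add_halves] using mem_bowenBall_add hzx (mem_bowenBall_comm.1 hzy)

lemma exists_countable_subset_cover_pairwiseDisjoint [TopologicalSpace.SeparableSpace X]
    (hf : Continuous f) (hε : 0 < ε) (W : Set X) :
    ∃ E ⊆ W, E.Countable ∧ E.PairwiseDisjoint (fun x => bowenBall f x n (ε / 2)) ∧
      W ⊆ ⋃ x ∈ E, bowenBall f x n ε := by
  obtain ⟨E, hmax⟩ := (bowenRel f n ε).exists_maximal_isSeparated W
  have : (bowenRel f n ε).IsRefl := ⟨fun _ => mem_bowenBall_self hε⟩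
  have : (bowenRel f n ε).IsSymm := ⟨fun _ _ => mem_bowenBall_comm.1⟩
  have hdisj := pairwiseDisjoint_bowenBall_half hmax.1.2
  refine ⟨E, hmax.1.1, hdisj.countable_of_isOpen (fun _ _ => isOpen_bowenBall hf)
    (fun x _ => ⟨x, mem_bowenBall_self (half_pos hε)⟩), hdisj, fun w hw => ?_⟩
  obtain ⟨x, hxE, hwx⟩ := SetRel.IsCover.of_maximal_isSeparated hmax hw
  exact mem_iUnion₂.2 ⟨x, hxE, mem_bowenBall_comm.1 hwx⟩

end Separated

section Birkhoff

variable [MetricSpace X] {f : X → X} {φ : X → ℝ}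

lemma continuous_birk (hf : Continuous f) (hφ : Continuous φ) (n : ℕ) :
    Continuous (birk f φ n) :=
  continuous_finsetSum _ fun i _ => hφ.comp (hf.iterate i)

lemma birk_le_add_of_mem_bowenBall {x y : X} {n : ℕ} {ε η : ℝ}
    (hmod : ∀ ⦃u v : X⦄, dist u v < ε → dist (φ u) (φ v) < η) (hy : y ∈ bowenBall f x n ε) :
    birk f φ n y ≤ birk f φ n x + n * η := by
  have hterm : ∀ i ∈ Finset.range n, φ (f^[i] y) ≤ φ (f^[i] x) + η := fun i hi => by
    have := hmod (mem_bowenBall_comm.1 hy i (Finset.mem_range.1 hi))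
    linarith [(abs_lt.1 (Real.dist_eq _ _ ▸ this)).2]
  calc birk f φ n y ≤ ∑ i ∈ Finset.range n, (φ (f^[i] x) + η) := Finset.sum_le_sum hterm
    _ = birk f φ n x + n * η := by simp [birk, Finset.sum_add_distrib]

end Birkhoff

lemma _root_.EReal.coe_sub_le_iff_inv_mul_le {L : EReal} {S c : ℝ} {n : ℕ} (hn : n ≠ 0) :
    ((S - n * c : ℝ) : EReal) ≤ L ↔ (((n : ℝ)⁻¹ : ℝ) : EReal) * (-L + S) ≤ c := by
  have hn' : (0 : ℝ) < n := by positivity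
  induction L using EReal.rec with
  | bot =>
    simp only [le_bot_iff, EReal.coe_ne_bot, EReal.neg_bot, EReal.top_add_coe,
      EReal.coe_mul_top_of_pos (inv_pos.2 hn'), top_le_iff, EReal.coe_ne_top]
  | top =>
    simp [EReal.coe_mul_bot_of_pos (inv_pos.2 hn' : (0 : ℝ) < (n : ℝ)⁻¹)]
  | coe L =>
    rw [← EReal.coe_neg, ← EReal.coe_add, ← EReal.coe_mul, EReal.coe_le_coe_iff,
      EReal.coe_le_coe_iff, inv_mul_le_iff₀ hn']
    constructor <;> intro h <;> linarith

lemma ofReal_exp_sub_le_iff {m : ℝ≥0∞} {S c : ℝ} {n : ℕ} (hn : n ≠ 0) :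
    ENNReal.ofReal (Real.exp (S - n * c)) ≤ m ↔ (((n : ℝ)⁻¹ : ℝ) : EReal) * (-m.log + S) ≤ c := by
  rw [← EReal.coe_sub_le_iff_inv_mul_le hn, ← ENNReal.log_le_log_iff,
    ENNReal.log_ofReal_of_pos (Real.exp_pos _), Real.log_exp]

section PtPressureAt

variable [MetricSpace X] [MeasurableSpace X] {f : X → X} {φ : X → ℝ} {μ : Measure X}
  {x : X} {ε ε' : ℝ}

noncomputable def ptPressureAt (f : X → X) (φ : X → ℝ) (μ : Measure X) (ε : ℝ) (x : X) :
    EReal :=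
  atTop.liminf fun n : ℕ =>
    (((n : ℝ)⁻¹ : ℝ) : EReal) * (-(μ (bowenBall f x n ε)).log + ((birk f φ n x : ℝ) : EReal))

lemma ptPressureAt_anti (h : ε ≤ ε') : ptPressureAt f φ μ ε' x ≤ ptPressureAt f φ μ ε x := by
  refine liminf_le_liminf (Eventually.of_forall fun n => ?_)
  gcongr
  exact EReal.neg_le_neg_iff.2 (ENNReal.log_monotone (measure_mono (bowenBall_mono h)))

lemma ptPressureAt_le_ptPressure (hε : 0 < ε) :
    ptPressureAt f φ μ ε x ≤ ptPressure f φ μ x :=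
  le_iSup₂ (f := fun ε (_ : 0 < ε) => ptPressureAt f φ μ ε x) ε hε

lemma ptPressure_eq_iSup_nat :
    ptPressure f φ μ x = ⨆ k : ℕ, ptPressureAt f φ μ (1 / (k + 1)) x := by
  refine le_antisymm (iSup₂_le fun ε hε => ?_)
    (iSup_le fun k => ptPressureAt_le_ptPressure Nat.one_div_pos_of_nat)
  obtain ⟨k, hk⟩ := exists_nat_one_div_lt hε
  exact (ptPressureAt_anti hk.le).trans (le_iSup_of_le k le_rfl)

lemma frequently_le_measure_bowenBall_of_ptPressureAt_lt {a : ℝ}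
    (h : ptPressureAt f φ μ ε x < a) :
    ∃ᶠ n in atTop, ENNReal.ofReal (Real.exp (birk f φ n x - n * a)) ≤ μ (bowenBall f x n ε) :=
  ((frequently_lt_of_liminf_lt (by isBoundedDefault) h).and_eventually
    (eventually_ne_atTop 0)).mono fun _ hn => (ofReal_exp_sub_le_iff hn.2).2 hn.1.le

lemma eventually_measure_bowenBall_le_of_lt_ptPressureAt {β : ℝ}
    (h : β < ptPressureAt f φ μ ε x) :
    ∀ᶠ n in atTop, μ (bowenBall f x n ε) ≤ ENNReal.ofReal (Real.exp (birk f φ n x - n * β)) :=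
  ((eventually_lt_of_lt_liminf h).and (eventually_ne_atTop 0)).mono fun _ hn =>
    (not_le.1 fun hle => hn.1.not_ge ((ofReal_exp_sub_le_iff hn.2).1 hle)).le

end PtPressureAt

section Measurability

variable [MetricSpace X] [SecondCountableTopology X] [MeasurableSpace X] [BorelSpace X]
  {f : X → X} {φ : X → ℝ}

lemma measurable_measure_bowenBall (hf : Continuous f) (μ : Measure X) [SFinite μ] (n : ℕ)
    (ε : ℝ) : Measurable fun x => μ (bowenBall f x n ε) :=
  measurable_measure_prodMk_left (isOpen_bowenRel hf).measurableSet

lemma measurable_ptPressureAt (hf : Continuous f) (hφ : Continuous φ) (μ : Measure X)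
    [SFinite μ] (ε : ℝ) : Measurable (ptPressureAt f φ μ ε) :=
  Measurable.liminf fun n => measurable_const.mul
    ((measurable_measure_bowenBall hf μ n ε).ennreal_log.neg.add
      (continuous_coe_real_ereal.comp (continuous_birk hf hφ n)).measurable)

lemma measurable_ptPressure (hf : Continuous f) (hφ : Continuous φ) (μ : Measure X)
    [SFinite μ] : Measurable (ptPressure f φ μ) := by
  simp_rw [funext fun x => ptPressure_eq_iSup_nat (f := f) (φ := φ) (μ := μ) (x := x)]
  exact .iSup fun k => measurable_ptPressureAt hf hφ μ _

end Measurability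

section LowerCover

variable [MetricSpace X] [MeasurableSpace X] {f : X → X} {φ : X → ℝ} {μ : Measure X}
  {Z : Set X} {α η ε : ℝ}

lemma measure_bowenBall_inter_le (hmod : ∀ ⦃u v : X⦄, dist u v < ε → dist (φ u) (φ v) < η)
    {x : X} {n : ℕ} {A : Set X} (hA : ∀ y ∈ A,
      μ (bowenBall f y n (2 * ε)) ≤ ENNReal.ofReal (Real.exp (birk f φ n y - n * (α + η)))) :
    μ (bowenBall f x n ε ∩ A) ≤ ENNReal.ofReal (Real.exp (-α * n + birk f φ n x)) := by
  rcases (bowenBall f x n ε ∩ A).eq_empty_or_nonempty with h | ⟨y, hyx, hyA⟩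
  · simp [h]
  calc μ (bowenBall f x n ε ∩ A) ≤ μ (bowenBall f y n (2 * ε)) :=
        measure_mono (inter_subset_left.trans (bowenBall_subset_two_mul hyx))
    _ ≤ ENNReal.ofReal (Real.exp (birk f φ n y - n * (α + η))) := hA y hyA
    _ ≤ ENNReal.ofReal (Real.exp (-α * n + birk f φ n x)) := by
      gcongr
      linarith [birk_le_add_of_mem_bowenBall hmod hyx]

lemma measure_inter_le_Mcov (hmod : ∀ ⦃u v : X⦄, dist u v < ε → dist (φ u) (φ v) < η)
    {A : Set X} {N : ℕ} (hA : ∀ y ∈ A, ∀ n, N < n →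
      μ (bowenBall f y n (2 * ε)) ≤ ENNReal.ofReal (Real.exp (birk f φ n y - n * (α + η)))) :
    μ (A ∩ Z) ≤ Mcov f φ Z α (N + 1) ε := by
  refine le_iInf₂ fun c ⟨hcN, hcov⟩ => ?_
  calc μ (A ∩ Z) ≤ μ (⋃ i, bowenBall f (c i).1 (c i).2 ε ∩ A) := measure_mono fun x hx => by
        obtain ⟨i, hi⟩ := mem_iUnion.1 (hcov hx.2)
        exact mem_iUnion.2 ⟨i, hi, hx.1⟩
    _ ≤ ∑' i, μ (bowenBall f (c i).1 (c i).2 ε ∩ A) := measure_iUnion_le _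
    _ ≤ _ := ENNReal.tsum_le_tsum fun i =>
        measure_bowenBall_inter_le hmod fun y hy => hA y hy _ (hcN i)

lemma ae_ptPressureAt_le_of_mZ_eq_zero
    (hmod : ∀ ⦃u v : X⦄, dist u v < ε → dist (φ u) (φ v) < η) (hmZ : mZ f φ Z α ε = 0) :
    ∀ᵐ x ∂μ, x ∈ Z → ptPressureAt f φ μ (2 * ε) x ≤ ((α + η : ℝ) : EReal) := by
  let A (N : ℕ) : Set X := {x | ∀ n, N < n →
    μ (bowenBall f x n (2 * ε)) ≤ ENNReal.ofReal (Real.exp (birk f φ n x - n * (α + η)))}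
  have hnull (N : ℕ) : μ (A N ∩ Z) = 0 := nonpos_iff_eq_zero.1 <|
    (measure_inter_le_Mcov hmod fun _ hy => hy).trans (ENNReal.iSup_eq_zero.1 hmZ _).le
  refine ae_iff.2 (measure_mono_null (fun x hx => ?_) (measure_iUnion_null hnull))
  simp only [Set.mem_ofPred_eq, Classical.not_imp, not_le] at hx
  obtain ⟨N, hN⟩ := eventually_atTop.1 (eventually_measure_bowenBall_le_of_lt_ptPressureAt hx.2)
  exact mem_iUnion.2 ⟨N, fun n hn => hN n hn.le, hx.1⟩

end LowerCover

section UpperCover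

variable [MetricSpace X] {f : X → X} {φ : X → ℝ}

-- Covers in `Mcov` are sequences, so only an infinite countable family can be re-indexed as one.
lemma Mcov_le_tsum {ι : Type*} [Countable ι] [Infinite ι] {Z : Set X} {α ε : ℝ} {N : ℕ}
    (c : ι → X × ℕ) (hcN : ∀ i, N ≤ (c i).2) (hcov : Z ⊆ ⋃ i, bowenBall f (c i).1 (c i).2 ε) :
    Mcov f φ Z α N ε ≤
      ∑' i, ENNReal.ofReal (Real.exp (-α * ((c i).2 : ℝ) + birk f φ (c i).2 (c i).1)) := by
  have : Encodable ι := Encodable.ofCountable ι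
  have : Denumerable ι := Denumerable.ofEncodableOfInfinite ι
  let e := Denumerable.eqv ι
  refine (iInf₂_le (c ∘ e.symm) ⟨fun i => hcN _, hcov.trans fun x hx => ?_⟩).trans_eq
    (e.symm.tsum_eq fun i =>
      ENNReal.ofReal (Real.exp (-α * ((c i).2 : ℝ) + birk f φ (c i).2 (c i).1)))
  obtain ⟨i, hi⟩ := mem_iUnion.1 hx
  exact mem_iUnion.2 ⟨e i, by simpa using hi⟩

variable [MeasurableSpace X] {μ : Measure X} [IsProbabilityMeasure μ]

lemma tsum_ofReal_exp_le_pow {E : Set X} {a δ ε : ℝ} {n : ℕ} (hf : Continuous f)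
    [OpensMeasurableSpace X] (hE : E.Countable)
    (hdisj : E.PairwiseDisjoint fun x => bowenBall f x n ε)
    (hlarge : ∀ x ∈ E,
      ENNReal.ofReal (Real.exp (birk f φ n x - n * a)) ≤ μ (bowenBall f x n ε)) :
    ∑' x : E, ENNReal.ofReal (Real.exp (-(a + δ) * n + birk f φ n x)) ≤
      ENNReal.ofReal (Real.exp (-δ)) ^ n := by
  have hsplit (x : X) : ENNReal.ofReal (Real.exp (-(a + δ) * n + birk f φ n x)) =
      ENNReal.ofReal (Real.exp (-δ)) ^ n * ENNReal.ofReal (Real.exp (birk f φ n x - n * a)) := by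
    rw [← ENNReal.ofReal_pow (Real.exp_nonneg _), ← Real.exp_nat_mul,
      ← ENNReal.ofReal_mul (Real.exp_nonneg _), ← Real.exp_add]
    ring_nf
  calc ∑' x : E, ENNReal.ofReal (Real.exp (-(a + δ) * n + birk f φ n x))
      ≤ ∑' x : E, ENNReal.ofReal (Real.exp (-δ)) ^ n * μ (bowenBall f x n ε) :=
        ENNReal.tsum_le_tsum fun x => (hsplit x).trans_le (by gcongr; exact hlarge x x.2)
    _ = ENNReal.ofReal (Real.exp (-δ)) ^ n * μ (⋃ x ∈ E, bowenBall f x n ε) := by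
        rw [ENNReal.tsum_mul_left,
          measure_biUnion hE hdisj fun _ _ => (isOpen_bowenBall hf).measurableSet]
    _ ≤ ENNReal.ofReal (Real.exp (-δ)) ^ n := mul_le_of_le_one_right' prob_le_one

lemma Mcov_le_pow_mul [TopologicalSpace.SeparableSpace X] [OpensMeasurableSpace X]
    (hf : Continuous f) {Z : Set X} (hZne : Z.Nonempty) {a δ ε : ℝ} (hε : 0 < ε)
    (hZ : ∀ x ∈ Z, ∃ᶠ n in atTop,
      ENNReal.ofReal (Real.exp (birk f φ n x - n * a)) ≤ μ (bowenBall f x n (ε / 2)))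
    {N M : ℕ} (hNM : N ≤ M) :
    Mcov f φ Z (a + δ) N ε ≤
      ENNReal.ofReal (Real.exp (-δ)) ^ M * (1 - ENNReal.ofReal (Real.exp (-δ)))⁻¹ := by
  let Zk (k : ℕ) : Set X := {x ∈ Z |
    ENNReal.ofReal (Real.exp (birk f φ k x - k * a)) ≤ μ (bowenBall f x k (ε / 2))}
  choose E hEZ hEc hEdisj hEcov using fun k =>
    exists_countable_subset_cover_pairwiseDisjoint (n := k) hf hε (Zk k)
  have hZ' (x : X) (hx : x ∈ Z) : ∃ᶠ k in atTop, x ∈ Zk (k + M) := by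
    have := hZ x hx
    rw [← map_add_atTop_eq_nat M, frequently_map] at this
    exact this.mono fun _ hk => ⟨hx, hk⟩
  let ι := Σ k : ℕ, E (k + M)
  have (k : ℕ) : Countable (E (k + M)) := (hEc _).to_subtype
  have : Infinite ι := by
    obtain ⟨z, hz⟩ := hZne
    refine not_finite_iff_infinite.1 fun hfin => Nat.frequently_atTop_iff_infinite.1 (hZ' z hz)
      ((Set.finite_range (Sigma.fst : ι → ℕ)).subset fun k hk => ?_)
    obtain ⟨x, hx, -⟩ := mem_iUnion₂.1 (hEcov _ hk)
    exact ⟨⟨k, x, hx⟩, rfl⟩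
  calc Mcov f φ Z (a + δ) N ε
      ≤ ∑' t : ι, ENNReal.ofReal (Real.exp (-(a + δ) * ((t.1 + M : ℕ) : ℝ) +
          birk f φ (t.1 + M) t.2)) :=
        Mcov_le_tsum (fun t : ι => ((t.2 : X), t.1 + M)) (fun _ => by omega) fun x hx => by
          obtain ⟨k, hk⟩ := (hZ' x hx).exists
          obtain ⟨y, hy, hxy⟩ := mem_iUnion₂.1 (hEcov _ hk)
          exact mem_iUnion.2 ⟨⟨k, y, hy⟩, hxy⟩
    _ = ∑' k, ∑' x : E (k + M), ENNReal.ofReal (Real.exp (-(a + δ) * ((k + M : ℕ) : ℝ) +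
          birk f φ (k + M) x)) := ENNReal.tsum_sigma' _
    _ ≤ ∑' k, ENNReal.ofReal (Real.exp (-δ)) ^ (k + M) := ENNReal.tsum_le_tsum fun k =>
        tsum_ofReal_exp_le_pow hf (hEc _) (hEdisj _) fun x hx => (hEZ _ hx).2
    _ = _ := by
        simp_rw [pow_add, ENNReal.tsum_mul_right, ENNReal.tsum_geometric, mul_comm]

lemma mZ_eq_zero_of_frequently [TopologicalSpace.SeparableSpace X] [OpensMeasurableSpace X]
    (hf : Continuous f) {Z : Set X} (hZne : Z.Nonempty) {a δ ε : ℝ} (hε : 0 < ε) (hδ : 0 < δ)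
    (hZ : ∀ x ∈ Z, ∃ᶠ n in atTop,
      ENNReal.ofReal (Real.exp (birk f φ n x - n * a)) ≤ μ (bowenBall f x n (ε / 2))) :
    mZ f φ Z (a + δ) ε = 0 := by
  have hr : ENNReal.ofReal (Real.exp (-δ)) < 1 :=
    ENNReal.ofReal_lt_one.2 (Real.exp_lt_one_iff.2 (neg_neg_of_pos hδ))
  have hlim : Tendsto (fun M : ℕ =>
      ENNReal.ofReal (Real.exp (-δ)) ^ M * (1 - ENNReal.ofReal (Real.exp (-δ)))⁻¹)
      atTop (nhds 0) := by
    simpa using ENNReal.Tendsto.mul_const (ENNReal.tendsto_pow_atTop_nhds_zero_iff.2 hr)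
      (.inr (ENNReal.inv_ne_top.2 (tsub_pos_of_lt hr).ne'))
  refine ENNReal.iSup_eq_zero.2 fun N => nonpos_iff_eq_zero.1 <| ge_of_tendsto hlim ?_
  exact eventually_atTop.2 ⟨N, fun M hM => Mcov_le_pow_mul (μ := μ) hf hZne hε hZ hM⟩

end UpperCover

section Interface

variable [MetricSpace X] {f : X → X} {φ : X → ℝ} {Z : Set X} {ε : ℝ}

lemma PZeps_le_of_mZ_eq_zero {α : ℝ} (h : mZ f φ Z α ε = 0) : PZeps f φ Z ε ≤ α :=
  iInf₂_le α h

lemma exists_mZ_eq_zero_of_PZeps_lt {r : EReal} (h : PZeps f φ Z ε < r) :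
    ∃ α : ℝ, mZ f φ Z α ε = 0 ∧ (α : EReal) < r := by
  simpa only [PZeps, iInf_lt_iff, exists_prop] using h

lemma exists_PZeps_lt_of_Pmu_lt [MeasurableSpace X] {μ : Measure X} {r : EReal} (hε : 0 < ε)
    (h : Pmu f φ μ < r) :
    ∃ Z, (MeasurableSet Z ∧ μ Z = 1) ∧ PZeps f φ Z ε < r := by
  have := (le_iSup₂ (f := fun ε (_ : 0 < ε) =>
    ⨅ (Z : Set X) (_ : MeasurableSet Z ∧ μ Z = 1), PZeps f φ Z ε) ε hε).trans_lt h
  simpa only [iInf_lt_iff, exists_prop] using this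

end Interface

lemma Pmu_le_essSup_ptPressure [MetricSpace X] [SecondCountableTopology X] [MeasurableSpace X]
    [BorelSpace X] {f : X → X} (hf : Continuous f) {φ : X → ℝ} (hφ : Continuous φ)
    {μ : Measure X} [IsProbabilityMeasure μ] :
    Pmu f φ μ ≤ essSup (ptPressure f φ μ) μ := by
  refine iSup₂_le fun ε hε => EReal.le_of_forall_lt_iff_le.1 fun a ha => ?_
  let Z := {x | ptPressure f φ μ x < a}
  have hZ : MeasurableSet Z := measurableSet_lt (measurable_ptPressure hf hφ μ) measurable_const
  have hZ1 : μ Z = 1 := (mem_ae_iff_prob_eq_one hZ).1 (ae_lt_of_essSup_lt ha)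
  refine (iInf₂_le Z ⟨hZ, hZ1⟩).trans <| EReal.le_of_forall_lt_iff_le.1 fun c hc =>
    PZeps_le_of_mZ_eq_zero ?_
  have hlarge (x : X) (hx : x ∈ Z) := frequently_le_measure_bowenBall_of_ptPressureAt_lt
    ((ptPressureAt_le_ptPressure (half_pos hε)).trans_lt hx)
  simpa using mZ_eq_zero_of_frequently hf (nonempty_of_measure_ne_zero (hZ1 ▸ one_ne_zero)) hε
    (sub_pos.2 (EReal.coe_lt_coe_iff.1 hc)) hlarge

lemma ae_ptPressureAt_le_of_Pmu_lt [MetricSpace X] [CompactSpace X] [MeasurableSpace X]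
    {f : X → X} {φ : X → ℝ} (hφ : Continuous φ) {μ : Measure X} [IsProbabilityMeasure μ]
    {ε' q : ℝ} (hε' : 0 < ε') (hq : Pmu f φ μ < q) :
    ∀ᵐ x ∂μ, ptPressureAt f φ μ ε' x ≤ q := by
  obtain ⟨r, hPr, hrq⟩ := EReal.exists_between_coe_real hq
  have hrq : r < q := EReal.coe_lt_coe_iff.1 hrq
  obtain ⟨θ, hθ, hmod⟩ := Metric.uniformContinuous_iff.1
    (CompactSpace.uniformContinuous_of_continuous hφ) (q - r) (sub_pos.2 hrq)
  have hε : 0 < min θ (ε' / 2) := lt_min hθ (half_pos hε')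
  obtain ⟨Z, ⟨hZ, hZ1⟩, hPZ⟩ := exists_PZeps_lt_of_Pmu_lt hε hPr
  obtain ⟨α, hαZ, hαr⟩ := exists_mZ_eq_zero_of_PZeps_lt hPZ
  filter_upwards [(mem_ae_iff_prob_eq_one hZ).2 hZ1, ae_ptPressureAt_le_of_mZ_eq_zero
    (fun _ _ huv => hmod (huv.trans_le (min_le_left _ _))) hαZ] with x hxZ hx
  calc ptPressureAt f φ μ ε' x ≤ ptPressureAt f φ μ (2 * min θ (ε' / 2)) x :=
        ptPressureAt_anti (by linarith [min_le_right θ (ε' / 2)])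
    _ ≤ ((α + (q - r) : ℝ) : EReal) := hx hxZ
    _ ≤ q := EReal.coe_le_coe_iff.2 (by linarith [EReal.coe_lt_coe_iff.1 hαr])

lemma essSup_ptPressure_le_Pmu [MetricSpace X] [CompactSpace X] [MeasurableSpace X]
    {f : X → X} {φ : X → ℝ} (hφ : Continuous φ) {μ : Measure X} [IsProbabilityMeasure μ] :
    essSup (ptPressure f φ μ) μ ≤ Pmu f φ μ := by
  refine EReal.le_of_forall_lt_iff_le.1 fun q hq => essSup_le_of_ae_le _ ?_
  filter_upwards [ae_all_iff.2 fun k : ℕ =>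
    ae_ptPressureAt_le_of_Pmu_lt hφ (Nat.one_div_pos_of_nat (n := k)) hq] with x hx
  exact ptPressure_eq_iSup_nat.trans_le (iSup_le hx)

end Paper

open Paper

theorem pressure_eq_essSup_ptPressure_general {X : Type*} [MetricSpace X] [CompactSpace X] [MeasurableSpace X] [BorelSpace X]
    (f : X → X) (hf : Continuous f) (φ : X → ℝ) (hφ : Continuous φ)
    (μ : Measure X) (hp : IsProbabilityMeasure μ) :
    Pmu f φ μ = essSup (fun x => ptPressure f φ μ x) μ :=
  le_antisymm (Pmu_le_essSup_ptPressure hf hφ) (essSup_ptPressure_le_Pmu hφ)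

/-- Proposition 4.2: the measure theoretic pressure is the essential supremum of the
point-wise measure theoretic pressure. -/
theorem pressure_eq_essSup_ptPressure {X : Type*} [MetricSpace X] [CompactSpace X] [MeasurableSpace X] [BorelSpace X]
    (f : X → X) (hf : Continuous f) (φ : X → ℝ) (hφ : Continuous φ)
    (μ : Measure X) (hp : IsProbabilityMeasure μ) (hinv : MeasurePreserving f μ μ) :
    Pmu f φ μ = essSup (fun x => ptPressure f φ μ x) μ :=
  pressure_eq_essSup_ptPressure_general f hf φ hφ μ hp
end
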